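/- Let d ≥ 1, T > 0, let O be a d×d real orthogonal matrix, b ∈ ℝ^d, and set g(x) := O x + b. Let σ : [0, T] → ℝ, and let f : ℝ^d × [0, T] → ℝ^d be continuously differentiable in x with f(g x, t) = O · f(x, t) for all x ∈ ℝ^d, t ∈ [0, T]. Suppose u : ℝ^d × [0, T] → ℝ is twice continuously differentiable in x and continuously differentiable in t, and satisfies the Fokker–Planck equation ∂_t u(x,t) = −∑_{i=1}^d ∂_{x_i}( f^i(x,t) · u(x,t) ) + (σ(t)²/2) · ∑_{i=1}^d ∂²_{x_i} u(x,t) for all (x,t) ∈ ℝ^d × [0, T]. Then v(x,t) := u(g x, t) satisfies the same equation: ∂_t v(x,t) = −∑_{i=1}^d ∂_{x_i}( f^i(x,t) · v(x,t) ) + (σ(t)²/2) · ∑_{i=1}^d ∂²_{x_i} v(x,t) for all (x,t) ∈ ℝ^d × [0, T]. -/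

import Mathlib

/-!
Write `g y = O y + b` and `U = u(·, t)`. Equivariance gives `f(y) = Oᵀ f(g y)`, so the flux
`f u ∘ g` of `v` is `Oᵀ (f u)(g y)`, and the chain rule gives `∇(U ∘ g) = Oᵀ (∇U ∘ g)`.
For any vector field `G`, the divergence of `y ↦ Oᵀ G(g y)` at `x` is the trace of
`Oᵀ DG(g x) O`, which is the trace of `DG(g x)` because `O Oᵀ = 1`. Hence both spatial terms
for `v` at `x` are those for `u` at `g x`, as is `∂ₜ v(x, t) = ∂ₜ u(g x, t)`.
-/

open Matrix

section

variable {ι : Type*} [Fintype ι] [DecidableEq ι]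

theorem Matrix.sum_conj_apply_single_self {R : Type*} [CommRing R] {A B : Matrix ι ι R}
    (hAB : A * B = 1) (φ : (ι → R) →ₗ[R] ι → R) :
    ∑ i, (B *ᵥ φ (A *ᵥ Pi.single i 1)) i = ∑ i, φ (Pi.single i 1) i := calc
  _ = trace (LinearMap.toMatrix' ((toLin' B).comp (φ.comp (toLin' A)))) := rfl
  _ = trace (B * (LinearMap.toMatrix' φ * A)) := by
    simp only [LinearMap.toMatrix'_comp, LinearMap.toMatrix'_toLin']
  _ = trace (LinearMap.toMatrix' φ) := by
    rw [← Matrix.mul_assoc, trace_mul_comm, ← Matrix.mul_assoc, hAB, Matrix.one_mul]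
  _ = _ := rfl

noncomputable def divergence (F : (ι → ℝ) → ι → ℝ) (x : ι → ℝ) : ℝ :=
  ∑ i, fderiv ℝ (fun y => F y i) x (Pi.single i 1)

noncomputable def partialDerivs (U : (ι → ℝ) → ℝ) (x : ι → ℝ) : ι → ℝ :=
  fun i => fderiv ℝ U x (Pi.single i 1)

theorem divergence_eq_sum_fderiv_apply {F : (ι → ℝ) → ι → ℝ} {x : ι → ℝ}
    (hF : DifferentiableAt ℝ F x) :
    divergence F x = ∑ i, fderiv ℝ F x (Pi.single i 1) i := by
  simp only [divergence, fderiv_apply hF, ContinuousLinearMap.comp_apply,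
    ContinuousLinearMap.proj_apply]

theorem hasFDerivAt_comp_affine {E : Type*} [NormedAddCommGroup E] [NormedSpace ℝ E]
    {G : (ι → ℝ) → E} {G' : (ι → ℝ) →L[ℝ] E} (A : Matrix ι ι ℝ) (b x : ι → ℝ)
    (hG : HasFDerivAt G G' (A *ᵥ x + b)) :
    HasFDerivAt (fun y => G (A *ᵥ y + b)) (G'.comp (toLin' A).toContinuousLinearMap) x :=
  hG.comp x (((toLin' A).toContinuousLinearMap.hasFDerivAt).add_const b)

theorem fderiv_comp_affine_apply {E : Type*} [NormedAddCommGroup E] [NormedSpace ℝ E]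
    {G : (ι → ℝ) → E} (A : Matrix ι ι ℝ) (b : ι → ℝ) {x : ι → ℝ}
    (hG : DifferentiableAt ℝ G (A *ᵥ x + b)) (v : ι → ℝ) :
    fderiv ℝ (fun y => G (A *ᵥ y + b)) x v = fderiv ℝ G (A *ᵥ x + b) (A *ᵥ v) := by
  rw [(hasFDerivAt_comp_affine A b x hG.hasFDerivAt).fderiv]
  rfl

theorem divergence_conj_affine {A B : Matrix ι ι ℝ} (hAB : A * B = 1) (b : ι → ℝ)
    {F : (ι → ℝ) → ι → ℝ} {x : ι → ℝ} (hF : DifferentiableAt ℝ F (A *ᵥ x + b)) :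
    divergence (fun y => B *ᵥ F (A *ᵥ y + b)) x = divergence F (A *ᵥ x + b) := by
  have hBF : HasFDerivAt (fun z => B *ᵥ F z)
      ((toLin' B).toContinuousLinearMap.comp (fderiv ℝ F (A *ᵥ x + b))) (A *ᵥ x + b) :=
    (toLin' B).toContinuousLinearMap.hasFDerivAt.comp _ hF.hasFDerivAt
  have h := hasFDerivAt_comp_affine A b x hBF
  rw [divergence_eq_sum_fderiv_apply h.differentiableAt, h.fderiv,
    divergence_eq_sum_fderiv_apply hF]
  exact sum_conj_apply_single_self hAB (fderiv ℝ F (A *ᵥ x + b)).toLinearMap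

theorem partialDerivs_comp_affine (A : Matrix ι ι ℝ) (b : ι → ℝ) {U : (ι → ℝ) → ℝ}
    (hU : Differentiable ℝ U) :
    partialDerivs (fun y => U (A *ᵥ y + b)) = fun y => Aᵀ *ᵥ partialDerivs U (A *ᵥ y + b) := by
  funext y i
  rw [partialDerivs, fderiv_comp_affine_apply A b (hU _), mulVec_single_one,
    pi_eq_sum_univ' (A.col i)]
  simp only [map_sum, map_smul, smul_eq_mul, col_apply, mulVec, dotProduct, transpose_apply,
    partialDerivs]

end

theorem stmt11_general {d : ℕ} {T : ℝ}
    (O : Matrix (Fin d) (Fin d) ℝ) (hO : O ∈ Matrix.orthogonalGroup (Fin d) ℝ)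
    (b : Fin d → ℝ) (σ : ℝ → ℝ)
    (f : (Fin d → ℝ) → ℝ → (Fin d → ℝ))
    (hf : ∀ t ∈ Set.Icc (0 : ℝ) T, ContDiff ℝ 1 fun x => f x t)
    (hf_equiv : ∀ x, ∀ t ∈ Set.Icc (0 : ℝ) T,
      f (O.mulVec x + b) t = O.mulVec (f x t))
    (u : (Fin d → ℝ) → ℝ → ℝ)
    (hu_x : ∀ t ∈ Set.Icc (0 : ℝ) T, ContDiff ℝ 2 fun x => u x t)
    (hFP : ∀ x, ∀ t ∈ Set.Icc (0 : ℝ) T,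
      deriv (fun τ => u x τ) t
        = -(∑ i, fderiv ℝ (fun y => f y t i * u y t) x (Pi.single i 1))
          + σ t ^ 2 / 2 *
            ∑ i, fderiv ℝ (fun y => fderiv ℝ (fun y' => u y' t) y (Pi.single i 1)) x
              (Pi.single i 1)) :
    ∀ x, ∀ t ∈ Set.Icc (0 : ℝ) T,
      deriv (fun τ => u (O.mulVec x + b) τ) t
        = -(∑ i, fderiv ℝ (fun y => f y t i * u (O.mulVec y + b) t) x (Pi.single i 1))
          + σ t ^ 2 / 2 *
            ∑ i, fderiv ℝ
              (fun y => fderiv ℝ (fun y' => u (O.mulVec y' + b) t) y (Pi.single i 1)) x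
              (Pi.single i 1) := by
  intro x t ht
  have hOOt : O * Oᵀ = 1 := (mem_orthogonalGroup_iff (Fin d) ℝ).mp hO
  have hOtO : Oᵀ * O = 1 := (mem_orthogonalGroup_iff' (Fin d) ℝ).mp hO
  set U : (Fin d → ℝ) → ℝ := fun z => u z t
  set F : (Fin d → ℝ) → Fin d → ℝ := fun z i => f z t i * U z
  have hflux : (fun y i => f y t i * U (O *ᵥ y + b)) = fun y => Oᵀ *ᵥ F (O *ᵥ y + b) := by
    funext y
    have hFg : F (O *ᵥ y + b) = U (O *ᵥ y + b) • (O *ᵥ f y t) := by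
      funext i
      simp only [F, hf_equiv y t ht, Pi.smul_apply, smul_eq_mul, mul_comm]
    rw [hFg, mulVec_smul, mulVec_mulVec, hOtO, one_mulVec]
    funext i
    simp only [Pi.smul_apply, smul_eq_mul, mul_comm]
  have hU : ContDiff ℝ 2 U := hu_x t ht
  have hF : Differentiable ℝ F := differentiable_pi.mpr fun i =>
    ((contDiff_pi.mp (hf t ht) i).differentiable one_ne_zero).mul (hU.differentiable two_ne_zero)
  have hgradU : Differentiable ℝ (partialDerivs U) := differentiable_pi.mpr fun i =>
    ((hU.fderiv_right one_add_one_eq_two.le).differentiable one_ne_zero).clm_apply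
      (differentiable_const _)
  rw [hFP _ t ht]
  change -divergence F (O *ᵥ x + b) + σ t ^ 2 / 2 * divergence (partialDerivs U) (O *ᵥ x + b)
    = -divergence (fun y i => f y t i * U (O *ᵥ y + b)) x
      + σ t ^ 2 / 2 * divergence (partialDerivs fun y => U (O *ᵥ y + b)) x
  rw [hflux, partialDerivs_comp_affine O b (hU.differentiable two_ne_zero),
    divergence_conj_affine hOOt b (hF _), divergence_conj_affine hOOt b (hgradU _)]

/-- Invariance of the Fokker–Planck equation under a rigid motion `g x = O x + b`:
if the drift `f` satisfies `f (g x) t = O · f x t` and `u` solves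
`∂ₜ u = −∑ᵢ ∂_{xᵢ}(fⁱ u) + (σ(t)²/2) ∑ᵢ ∂²_{xᵢ} u` on `ℝ^d × [0,T]`,
then `v(x,t) := u(g x, t)` solves the same equation. -/
theorem stmt11 {d : ℕ} (hd : 1 ≤ d) {T : ℝ} (hT : 0 < T)
    (O : Matrix (Fin d) (Fin d) ℝ) (hO : O ∈ Matrix.orthogonalGroup (Fin d) ℝ)
    (b : Fin d → ℝ) (σ : ℝ → ℝ)
    (f : (Fin d → ℝ) → ℝ → (Fin d → ℝ))
    (hf : ∀ t ∈ Set.Icc (0 : ℝ) T, ContDiff ℝ 1 fun x => f x t)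
    (hf_equiv : ∀ x, ∀ t ∈ Set.Icc (0 : ℝ) T,
      f (O.mulVec x + b) t = O.mulVec (f x t))
    (u : (Fin d → ℝ) → ℝ → ℝ)
    (hu_x : ∀ t ∈ Set.Icc (0 : ℝ) T, ContDiff ℝ 2 fun x => u x t)
    (hu_t : ∀ x, ContDiff ℝ 1 fun t => u x t)
    (hFP : ∀ x, ∀ t ∈ Set.Icc (0 : ℝ) T,
      deriv (fun τ => u x τ) t
        = -(∑ i, fderiv ℝ (fun y => f y t i * u y t) x (Pi.single i 1))
          + σ t ^ 2 / 2 *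
            ∑ i, fderiv ℝ (fun y => fderiv ℝ (fun y' => u y' t) y (Pi.single i 1)) x
              (Pi.single i 1)) :
    ∀ x, ∀ t ∈ Set.Icc (0 : ℝ) T,
      deriv (fun τ => u (O.mulVec x + b) τ) t
        = -(∑ i, fderiv ℝ (fun y => f y t i * u (O.mulVec y + b) t) x (Pi.single i 1))
          + σ t ^ 2 / 2 *
            ∑ i, fderiv ℝ
              (fun y => fderiv ℝ (fun y' => u (O.mulVec y' + b) t) y (Pi.single i 1)) x
              (Pi.single i 1) :=
  stmt11_general O hO b σ f hf hf_equiv u hu_x hFP
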